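/- arXiv:q-alg/9710007 — 2 statements merged into one kernel-verified Lean document; each statement's English description precedes it below -/
import Mathlib

section
/- Let Λ′ ∈ P^+_{l′}, Λ″ ∈ P^+_{l″} and p ∈ 𝒫(Λ′,Λ″). For each k ≥ 0 set η_k = p_{k+1} − p_k and η^♯_k = (♯p)_{k+1} − (♯p)_k. Then η^♯_k ∈ A^+_{l′}, and its associated dominant weight η̂^♯_k is obtained from p_k − η̂_k by applying the linear map Λ_i ↦ Λ_{k−i}; that is, η̂^♯_k(i) = (p_k − η̂_k)(k − i) for all i ∈ ℤ/nℤ. -/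
open scoped BigOperators

namespace BF

/-- The fundamental weight `Λ_i`, viewed as the indicator function `ZMod n → ℤ` of `i`. -/
def Lam (n : ℕ) (i : ZMod n) : ZMod n → ℤ := fun j => if j = i then 1 else 0

/-- A weight is dominant if all its coefficients are nonnegative. -/
def Dominant (n : ℕ) (a : ZMod n → ℤ) : Prop := ∀ i, 0 ≤ a i

/-- The step weight of `e : ZMod n → ℕ`: its `Λ_j`-coefficient is `e (j-1) - e j`. -/
def stepWt (n : ℕ) (e : ZMod n → ℕ) : ZMod n → ℤ := fun j => (e (j - 1) : ℤ) - (e j : ℤ)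

/-- Membership in `A_l^+`: `d` is the step weight of some `e : ZMod n → ℕ` of total sum `l`. -/
def InA (n : ℕ) [NeZero n] (l : ℕ) (d : ZMod n → ℤ) : Prop :=
  ∃ e : ZMod n → ℕ, (∑ i, e i) = l ∧ d = stepWt n e

/-- The ground-state path of the weight `Λ`: `p̄_k (i) = Λ (i - k)`,
which is the coefficient form of `p̄_k = Λ_{v₀+k} + ⋯ + Λ_{v_{l-1}+k}`. -/
def gsp (n : ℕ) (Λ : ZMod n → ℤ) (k : ℕ) : ZMod n → ℤ := fun i => Λ (i - (k : ZMod n))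

/-- `p` is a `Λ`-path of level `l`. -/
def IsPath (n : ℕ) [NeZero n] (l : ℕ) (Λ : ZMod n → ℤ) (p : ℕ → ZMod n → ℤ) : Prop :=
  (∀ k, InA n l (fun i => p (k + 1) i - p k i)) ∧ ∃ K, ∀ k ≥ K, p k = gsp n Λ k

/-- The length of a `Λ`-path: least `K` with `p k = p̄ k` for all `k ≥ K`. -/
noncomputable def pathLen (n : ℕ) (Λ : ZMod n → ℤ) (p : ℕ → ZMod n → ℤ) : ℕ :=
  sInf {K | ∀ k ≥ K, p k = gsp n Λ k}

/-- `f : ℕ → ℕ` is a partition (rows are indexed from `0`). -/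
def IsPartitionF (f : ℕ → ℕ) : Prop := (∀ i, f (i + 1) ≤ f i) ∧ ∃ N, ∀ i ≥ N, f i = 0

/-- An `l`-multipartition. -/
def IsMP (l : ℕ) (lam : Fin l → ℕ → ℕ) : Prop := ∀ j, IsPartitionF (lam j)

/-- The data `v : Fin l → ℕ` of a decomposition `Λ = Λ_{v 0} + ⋯ + Λ_{v (l-1)}`
with `0 ≤ v 0 ≤ ⋯ ≤ v (l-1) < n`. -/
def SortedV (n l : ℕ) (v : Fin l → ℕ) : Prop := Monotone v ∧ ∀ j, v j < n

/-- The weight `Λ = Λ_{v 0} + ⋯ + Λ_{v (l-1)}` determined by `v`. -/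
def wtOf (n : ℕ) {l : ℕ} (v : Fin l → ℕ) : ZMod n → ℤ :=
  fun i => ((Finset.univ.filter fun j : Fin l => ((v j : ZMod n) = i)).card : ℤ)

/-- The colour of the node in (0-based) row `i`, (1-based) column `c` of component `j`:
`(c - (i+1) + v j) mod n`. -/
def colour (n : ℕ) {l : ℕ} (v : Fin l → ℕ) (j : Fin l) (i c : ℕ) : ZMod n :=
  (c : ZMod n) - (i : ZMod n) - 1 + (v j : ZMod n)

/-- `N^r(λ)`: the total number of nodes of colour `r` in the multipartition `λ`. -/
noncomputable def Ncolour (n : ℕ) {l : ℕ} (v : Fin l → ℕ) (lam : Fin l → ℕ → ℕ)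
    (r : ZMod n) : ℕ :=
  Nat.card {x : Fin l × ℕ × ℕ //
    1 ≤ x.2.2 ∧ x.2.2 ≤ lam x.1 x.2.1 ∧ colour n v x.1 x.2.1 x.2.2 = r}

/-- The height `f′_m` of the `m`-th column of the partition `f`. -/
noncomputable def colHt (f : ℕ → ℕ) (m : ℕ) : ℕ := Nat.card {i : ℕ // m ≤ f i}

/-- The function `e` whose step weight is the `k`-th step of `π(λ)`:
`e i = #{j : v j + k - λ^{(j)′}_{k+1} ≡ i mod n}`. -/
noncomputable def eFun (n : ℕ) {l : ℕ} (v : Fin l → ℕ) (lam : Fin l → ℕ → ℕ) (k : ℕ) :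
    ZMod n → ℕ :=
  fun i => Nat.card {j : Fin l //
    (v j : ZMod n) + (k : ZMod n) - (colHt (lam j) (k + 1) : ZMod n) = i}

/-- `p = π(λ)` where `λ` is an `l`-multipartition of highest weight `wtOf n v`. -/
def IsPi (n : ℕ) {l : ℕ} (v : Fin l → ℕ) (lam : Fin l → ℕ → ℕ)
    (p : ℕ → ZMod n → ℤ) : Prop :=
  (∀ k, (fun i => p (k + 1) i - p k i) = stepWt n (eFun n v lam k)) ∧
  ∃ K, ∀ k ≥ K, p k = gsp n (wtOf n v) k

/-- `λ` is cylindrical of highest weight `Λ = wtOf n v`. -/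
def Cylindrical (n : ℕ) {l : ℕ} (v : Fin l → ℕ) (lam : Fin l → ℕ → ℕ) : Prop :=
  (∀ (j : ℕ) (hj : j + 1 < l) (i : ℕ),
      lam ⟨j + 1, hj⟩ (i + (v ⟨j + 1, hj⟩ - v ⟨j, Nat.lt_of_succ_lt hj⟩)) ≤
        lam ⟨j, Nat.lt_of_succ_lt hj⟩ i) ∧
  ∀ (hl : 0 < l) (i : ℕ),
      lam ⟨0, hl⟩ (i + (n + v ⟨0, hl⟩ - v ⟨l - 1, Nat.sub_lt hl Nat.one_pos⟩)) ≤
        lam ⟨l - 1, Nat.sub_lt hl Nat.one_pos⟩ i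

/-- `λ` is higher than `μ`: every column of each component of `λ` is at most as high as
the corresponding column of `μ`. -/
def Higher {l : ℕ} (lam mu : Fin l → ℕ → ℕ) : Prop :=
  ∀ (j : Fin l) (k : ℕ), 1 ≤ k → colHt (lam j) k ≤ colHt (mu j) k

/-- `λ` is the highest-lift of the path `p`: it is a cylindrical multipartition with
`π(λ) = p` which is higher than every cylindrical multipartition mapping to `p`. -/
def IsHL (n : ℕ) {l : ℕ} (v : Fin l → ℕ) (lam : Fin l → ℕ → ℕ)
    (p : ℕ → ZMod n → ℤ) : Prop :=
  IsMP l lam ∧ Cylindrical n v lam ∧ IsPi n v lam p ∧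
    ∀ mu : Fin l → ℕ → ℕ, IsMP l mu → Cylindrical n v mu → IsPi n v mu p → Higher lam mu

/-- `λ ∈ 𝒴(Λ)` with `Λ = wtOf n v`. -/
def InY (n : ℕ) {l : ℕ} (v : Fin l → ℕ) (lam : Fin l → ℕ → ℕ) : Prop :=
  ∃ p, IsHL n v lam p

/-- `α′_r = -Λ_{r-1} + 2Λ_r - Λ_{r+1}`. -/
def alphaP (n : ℕ) (r : ZMod n) : ZMod n → ℤ :=
  fun i => -(Lam n (r - 1) i) + 2 * Lam n r i - Lam n (r + 1) i

/-- `ψ_r(k)`: the number of length-`k` rows of `λ` whose right end has colour `r`. -/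
noncomputable def psiCount (n : ℕ) {l : ℕ} (v : Fin l → ℕ) (lam : Fin l → ℕ → ℕ)
    (k : ℕ) (r : ZMod n) : ℕ :=
  Nat.card {x : Fin l × ℕ // lam x.1 x.2 = k ∧ colour n v x.1 x.2 k = r}

/-- The number of length-`k` rows of `λ` whose left end has colour `r`. -/
noncomputable def leftCount (n : ℕ) {l : ℕ} (v : Fin l → ℕ) (lam : Fin l → ℕ → ℕ)
    (k : ℕ) (r : ZMod n) : ℕ :=
  Nat.card {x : Fin l × ℕ // lam x.1 x.2 = k ∧ colour n v x.1 x.2 1 = r}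

/-- The total number of length-`k` rows of `λ`. -/
noncomputable def rowCount {l : ℕ} (lam : Fin l → ℕ → ℕ) (k : ℕ) : ℕ :=
  Nat.card {x : Fin l × ℕ // lam x.1 x.2 = k}

/-- `m_r(k)`: the number of `r`-nodes of `λ` in column `k` or to its right. -/
noncomputable def mCount (n : ℕ) {l : ℕ} (v : Fin l → ℕ) (lam : Fin l → ℕ → ℕ)
    (k : ℕ) (r : ZMod n) : ℕ :=
  Nat.card {x : Fin l × ℕ × ℕ //
    k ≤ x.2.2 ∧ x.2.2 ≤ lam x.1 x.2.1 ∧ colour n v x.1 x.2.1 x.2.2 = r}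

/-- `p` is a `(Λ′,Λ″)`-restricted path, where `l''` is the level of `Λ″`:
`p - Λ′ ∈ 𝒫(Λ″)` and `p_k - η̂_k` is dominant for all `k`. -/
def IsRes (n : ℕ) [NeZero n] (l'' : ℕ) (L' L'' : ZMod n → ℤ) (p : ℕ → ZMod n → ℤ) : Prop :=
  IsPath n l'' L'' (fun k i => p k i - L' i) ∧
  ∀ k, ∃ e : ZMod n → ℕ, (∑ i, e i) = l'' ∧
    (fun i => p (k + 1) i - p k i) = stepWt n e ∧ ∀ i, (e i : ℤ) ≤ p k i

/-- The length of a restricted path: `ℓ(p) = ℓ(p - Λ′)`. -/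
noncomputable def resLen (n : ℕ) (L' L'' : ZMod n → ℤ) (p : ℕ → ZMod n → ℤ) : ℕ :=
  sInf {K | ∀ k ≥ K, (fun i => p k i - L' i) = gsp n L'' k}

/-- `♯Λ`. -/
def sharpWt (n : ℕ) (Λ : ZMod n → ℤ) : ZMod n → ℤ := fun i => Λ (-i)

/-- `♯p`: `(♯p)_k (i) = a_{k-i}(k)` where `p_k = ∑ a_i(k) Λ_i`. -/
def sharpPath (n : ℕ) (p : ℕ → ZMod n → ℤ) : ℕ → ZMod n → ℤ :=
  fun k i => p k ((k : ZMod n) - i)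

/-- `θ(a) = 1` if `a ≥ 0`, `0` otherwise. -/
def theta (a : ℤ) : ℕ := if 0 ≤ a then 1 else 0

/-- The function counting the entries of `μ : Fin l → ℕ` in each class mod `n`. -/
def cntF (n : ℕ) {l : ℕ} (μ : Fin l → ℕ) : ZMod n → ℕ :=
  fun i => (Finset.univ.filter fun j : Fin l => ((μ j : ZMod n) = i)).card

/-- The energy function `H` on `A_l^+ × A_l^+`:
`H(α,β) = min_{σ ∈ S_l} ∑_j θ(μ_j - ν_{σ(j)})` where `α`, `β` are the step weights of
`Λ_{μ_0} + ⋯ + Λ_{μ_{l-1}}`, `Λ_{ν_0} + ⋯ + Λ_{ν_{l-1}}` with `0 ≤ μ_j, ν_j < n`. -/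
noncomputable def Hfun (n : ℕ) (l : ℕ) (d d' : ZMod n → ℤ) : ℕ :=
  sInf {m | ∃ μ ν : Fin l → ℕ, (∀ j, μ j < n) ∧ (∀ j, ν j < n) ∧
    d = stepWt n (cntF n μ) ∧ d' = stepWt n (cntF n ν) ∧
    m = Finset.univ.inf' ⟨1, Finset.mem_univ 1⟩
      fun σ : Equiv.Perm (Fin l) => ∑ j, theta ((μ j : ℤ) - (ν (σ j) : ℤ))}

/-- `(j, i)` is a removable `r`-node of `λ` (node at the right end of 0-based row `i`
of component `j`). -/
def RemNode (n : ℕ) {l : ℕ} (v : Fin l → ℕ) (lam : Fin l → ℕ → ℕ) (r : ZMod n)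
    (j : Fin l) (i : ℕ) : Prop :=
  1 ≤ lam j i ∧ lam j (i + 1) < lam j i ∧ colour n v j i (lam j i) = r

/-- `(j, i)` is an addable `r`-node of `λ` (node addable at the end of 0-based row `i`
of component `j`). -/
def AddNode (n : ℕ) {l : ℕ} (v : Fin l → ℕ) (lam : Fin l → ℕ → ℕ) (r : ZMod n)
    (j : Fin l) (i : ℕ) : Prop :=
  (i = 0 ∨ lam j i < lam j (i - 1)) ∧ colour n v j i (lam j i + 1) = r

/-- The diagonal number `d = c - (i+1) + v j` of the addable/removable node
`x = (j, i, isRemovable)`. -/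
def nodeD {l : ℕ} (v : Fin l → ℕ) (lam : Fin l → ℕ → ℕ) (x : Fin l × ℕ × Bool) : ℤ :=
  (if x.2.2 then (lam x.1 x.2.1 : ℤ) else (lam x.1 x.2.1 : ℤ) + 1) - ((x.2.1 : ℤ) + 1) + (v x.1 : ℤ)

/-- The total order on addable/removable nodes: `(d,j) < (d',j')` iff `d < d'`, or
`d = d'` and `j > j'`. -/
def nodeLT {l : ℕ} (v : Fin l → ℕ) (lam : Fin l → ℕ → ℕ) (x y : Fin l × ℕ × Bool) : Prop :=
  nodeD v lam x < nodeD v lam y ∨ (nodeD v lam x = nodeD v lam y ∧ (y.1 : ℕ) < (x.1 : ℕ))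

/-- `L` is the `r`-signature of `λ`: the increasing list of all addable and removable
`r`-nodes (flag `true` = removable, `false` = addable). -/
def IsSig (n : ℕ) {l : ℕ} (v : Fin l → ℕ) (lam : Fin l → ℕ → ℕ) (r : ZMod n)
    (L : List (Fin l × ℕ × Bool)) : Prop :=
  L.Pairwise (nodeLT v lam) ∧
  ∀ x : Fin l × ℕ × Bool, x ∈ L ↔
    ((x.2.2 = true ∧ RemNode n v lam r x.1 x.2.1) ∨
      (x.2.2 = false ∧ AddNode n v lam r x.1 x.2.1))

/-- One step of the reduction procedure on signature words: delete an adjacent pair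
consisting of a removable node (`true`) immediately followed by an addable node (`false`). -/
inductive SigStep : List Bool → List Bool → Prop
  | pair (l₁ l₂ : List Bool) : SigStep (l₁ ++ true :: false :: l₂) (l₁ ++ l₂)



lemma sum_stepWt (n : ℕ) [NeZero n] (e : ZMod n → ℕ) :
    ∑ j, stepWt n e j = 0 := by
  unfold stepWt
  rw [Finset.sum_sub_distrib,
    Fintype.sum_bijective (fun j : ZMod n => j - 1)
      (Equiv.subRight (1 : ZMod n)).bijective
      (fun j => (e (j - 1) : ℤ)) (fun j => (e j : ℤ)) (fun j => rfl)]
  exact sub_self _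

lemma stepWt_inj (n : ℕ) [NeZero n] (e e₀ : ZMod n → ℕ)
    (hs : ∑ i, e i = ∑ i, e₀ i) (h : stepWt n e = stepWt n e₀) :
    ∀ i, (e i : ℤ) = e₀ i := by
  set f : ZMod n → ℤ := fun j => (e j : ℤ) - e₀ j with hf
  have hstep : ∀ j, f (j - 1) = f j := by
    intro j
    have h2 := congrFun h j
    simp only [stepWt] at h2
    simp only [hf]
    linarith
  have hconst : ∀ (m : ℕ) (j : ZMod n), f (j - (m : ZMod n)) = f j := by
    intro m
    induction m with
    | zero => simp
    | succ m ih =>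
      intro j
      have hj : j - ((m + 1 : ℕ) : ZMod n) = (j - (m : ZMod n)) - 1 := by
        push_cast; ring
      rw [hj, hstep, ih]
  have hconst' : ∀ i : ZMod n, f i = f 0 := by
    intro i
    have hi : (0 : ZMod n) - (((-i).val : ℕ) : ZMod n) = i := by
      rw [ZMod.natCast_val, ZMod.cast_id]; ring
    calc f i = f ((0 : ZMod n) - (((-i).val : ℕ) : ZMod n)) := by rw [hi]
    _ = f 0 := hconst _ _
  have hsum : ∑ i, f i = 0 := by
    simp only [hf, Finset.sum_sub_distrib]
    have hc : (∑ i, (e i : ℤ)) = ∑ i, (e₀ i : ℤ) := by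
      have := congrArg (fun m : ℕ => (m : ℤ)) hs
      push_cast at this
      exact this
    linarith
  have hcard : (((Finset.univ : Finset (ZMod n)).card : ℕ) : ℤ) * f 0 = 0 := by
    rw [← hsum, Finset.sum_congr rfl (fun i _ => hconst' i), Finset.sum_const,
      nsmul_eq_mul]
  have hn0 : ((Finset.univ : Finset (ZMod n)).card : ℤ) ≠ 0 := by
    simp only [Finset.card_univ, ZMod.card]
    exact_mod_cast NeZero.ne n
  have hf0 : f 0 = 0 := by
    rcases mul_eq_zero.mp hcard with h' | h'
    · exact absurd h' hn0
    · exact h'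
  intro i
  have hfi := hconst' i
  rw [hf0] at hfi
  simpa [hf, sub_eq_zero] using hfi

/-- for `p ∈ 𝒫(Λ′,Λ″)`, `η♯_k ∈ A⁺_{l′}` and its associated dominant
weight satisfies `η̂♯_k(i) = (p_k - η̂_k)(k - i)`. -/
theorem sharp_step (n : ℕ) [NeZero n] (hn : 2 ≤ n) (l' l'' : ℕ)
    (L' L'' : ZMod n → ℤ)
    (hd' : Dominant n L') (hl' : (∑ i, L' i) = (l' : ℤ))
    (hd'' : Dominant n L'') (hl'' : (∑ i, L'' i) = (l'' : ℤ))
    (p : ℕ → ZMod n → ℤ) (hp : IsRes n l'' L' L'' p) :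
    ∀ (k : ℕ) (e : ZMod n → ℕ), (∑ i, e i) = l'' →
      ((fun i => p (k + 1) i - p k i) = stepWt n e) →
      ∃ e' : ZMod n → ℕ, (∑ i, e' i) = l' ∧
        ((fun i => sharpPath n p (k + 1) i - sharpPath n p k i) = stepWt n e') ∧
        ∀ i, (e' i : ℤ) = p k ((k : ZMod n) - i) - (e ((k : ZMod n) - i) : ℤ) := by
  intro k e hesum hestep
  obtain ⟨hpath, hres⟩ := hp
  obtain ⟨e₀, he₀sum, he₀step, he₀le⟩ := hres k
  have hee₀ : ∀ i, (e i : ℤ) = e₀ i := by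
    apply stepWt_inj n e e₀ (by rw [hesum, he₀sum])
    rw [← hestep, he₀step]
  have hle : ∀ i, (e i : ℤ) ≤ p k i := fun i => (hee₀ i).le.trans (he₀le i)
  have nn : ∀ j : ZMod n, 0 ≤ p k j - (e j : ℤ) := fun j => by have := hle j; linarith
  -- sum of p k
  have hsumstep : ∀ m, ∑ i, p (m + 1) i = ∑ i, p m i := by
    intro m
    obtain ⟨em, hemsum, hemstep, _⟩ := hres m
    have h0 : ∑ i, (p (m + 1) i - p m i) = 0 := by
      have h := sum_stepWt n em
      rw [← hemstep] at h
      simpa using h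
    rw [Finset.sum_sub_distrib] at h0
    linarith
  have hshift : ∀ a b : ℕ, ∑ i, p a i = ∑ i, p (a + b) i := by
    intro a b
    induction b with
    | zero => rfl
    | succ b ih => rw [show a + (b + 1) = (a + b) + 1 from rfl, hsumstep (a + b)]; exact ih
  obtain ⟨hsteps, K, hK⟩ := hpath
  have hpK : ∑ i, p (k + K) i = (l' : ℤ) + l'' := by
    have h1 := hK (k + K) (Nat.le_add_left K k)
    have h2 : ∀ i, p (k + K) i = L' i + L'' (i - ((k + K : ℕ) : ZMod n)) := by
      intro i
      have h3 := congrFun h1 i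
      simp only [gsp] at h3
      linarith
    calc ∑ i, p (k + K) i
        = ∑ i, (L' i + L'' (i - ((k + K : ℕ) : ZMod n))) :=
          Finset.sum_congr rfl (fun i _ => h2 i)
      _ = (∑ i, L' i) + ∑ i, L'' (i - ((k + K : ℕ) : ZMod n)) := Finset.sum_add_distrib
      _ = (l' : ℤ) + l'' := by
          rw [hl',
            Fintype.sum_bijective (fun j : ZMod n => j - ((k + K : ℕ) : ZMod n))
              (Equiv.subRight ((k + K : ℕ) : ZMod n)).bijective
              (fun j => L'' (j - ((k + K : ℕ) : ZMod n))) L'' (fun j => rfl), hl'']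
  have hsump : ∑ i, p k i = (l' : ℤ) + l'' := by rw [hshift k K]; exact hpK
  refine ⟨fun i => (p k ((k : ZMod n) - i) - (e ((k : ZMod n) - i) : ℤ)).toNat, ?_, ?_, ?_⟩
  · have h2 : ∑ i, (p k ((k : ZMod n) - i) - (e ((k : ZMod n) - i) : ℤ)) = (l' : ℤ) := by
      rw [Fintype.sum_bijective (fun j : ZMod n => (k : ZMod n) - j)
        (Equiv.subLeft ((k : ℕ) : ZMod n)).bijective
        (fun j => p k ((k : ZMod n) - j) - (e ((k : ZMod n) - j) : ℤ))
        (fun j => p k j - (e j : ℤ)) (fun j => rfl)]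
      rw [Finset.sum_sub_distrib, hsump]
      have he : ∑ j, (e j : ℤ) = (l'' : ℤ) := by exact_mod_cast hesum
      rw [he]; ring
    have h3 : ((∑ i, (p k ((k : ZMod n) - i) - (e ((k : ZMod n) - i) : ℤ)).toNat : ℕ) : ℤ)
        = (l' : ℤ) := by
      push_cast
      rw [Finset.sum_congr rfl (fun i _ => Int.toNat_of_nonneg (nn _))]
      exact h2
    exact_mod_cast h3
  · funext i
    have hidx1 : ((k + 1 : ℕ) : ZMod n) - i = (k : ZMod n) + 1 - i := by push_cast; ring
    have hidx2 : (k : ZMod n) - (i - 1) = (k : ZMod n) + 1 - i := by ring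
    have hidx3 : ((k : ZMod n) + 1 - i) - 1 = (k : ZMod n) - i := by ring
    have hs := congrFun hestep ((k : ZMod n) + 1 - i)
    simp only [stepWt] at hs
    rw [hidx3] at hs
    simp only [sharpPath, stepWt]
    rw [hidx1, hidx2, Int.toNat_of_nonneg (nn _), Int.toNat_of_nonneg (nn _)]
    linarith
  · intro i
    exact Int.toNat_of_nonneg (nn _)

end BF
end

section
/- Let Λ ∈ P_l^+, u ∈ {0,…,n−1}, and λ ∈ 𝒴(Λ) with p = π(λ). Assume that λ̲ ∈ 𝒴(Λ_{−u}) and that, for every k > 0 and r ∈ ℤ/nℤ, the number of length-k rows of λ̲ with left end of colour r equals the number of length-k rows of λ with right end of colour −r. Then the Λ_{−u}-path p̲ := π(λ̲) satisfies p̲_k = Λ_{k−u} − ♯Λ + (♯p)_k for every k ≥ 0. -/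
open scoped BigOperators

namespace BF

section Auxiliary

open Finset

lemma indZ_congr {P Q : Prop} [Decidable P] [Decidable Q] (h : P ↔ Q) :
    (if P then (1:ℤ) else 0) = if Q then (1:ℤ) else 0 := if_congr h rfl rfl

lemma partAntitone {f : ℕ → ℕ} (hf : IsPartitionF f) : Antitone f :=
  antitone_nat_of_succ_le hf.1

lemma colHt_iff {f : ℕ → ℕ} (hf : IsPartitionF f) {m : ℕ} (hm : 1 ≤ m) (i : ℕ) :
    m ≤ f i ↔ i < colHt f m := by
  obtain ⟨N, hN⟩ := hf.2
  have hfin : ({j | m ≤ f j} : Set ℕ).Finite := by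
    apply (Set.finite_Iio N).subset
    intro j hj
    simp only [Set.mem_setOf_eq] at hj
    simp only [Set.mem_Iio]
    by_contra hb
    have := hN j (not_lt.mp hb)
    omega
  have hcol : colHt f m = ({j | m ≤ f j} : Set ℕ).ncard :=
    Nat.card_coe_set_eq {j | m ≤ f j}
  constructor
  · intro h
    have hsub : Set.Iic i ⊆ {j | m ≤ f j} := fun j hj =>
      le_trans h (partAntitone hf hj)
    have h2 := Set.ncard_le_ncard hsub hfin
    rw [← Finset.coe_Iic, Set.ncard_coe_finset, Nat.card_Iic] at h2
    omega
  · intro h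
    by_contra hb
    have hsub : {j | m ≤ f j} ⊆ Set.Iio i := by
      intro j hj
      simp only [Set.mem_setOf_eq] at hj
      simp only [Set.mem_Iio]
      by_contra hb2
      have := partAntitone hf (not_lt.mp hb2)
      omega
    have h2 := Set.ncard_le_ncard hsub (Set.finite_Iio i)
    rw [← Finset.coe_Iio, Set.ncard_coe_finset, Nat.card_Iio] at h2
    omega

lemma colHt_eq_zero {f : ℕ → ℕ} {C k : ℕ} (hC : ∀ i, f i ≤ C) (hk : C ≤ k) :
    colHt f (k + 1) = 0 := by
  have : IsEmpty {i : ℕ // k + 1 ≤ f i} := ⟨fun x => by have := hC x.1; have := x.2; omega⟩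
  exact Nat.card_of_isEmpty

lemma exists_bounds {l : ℕ} {lam : Fin l → ℕ → ℕ} (h : IsMP l lam) :
    ∃ B C : ℕ, (∀ j i, B ≤ i → lam j i = 0) ∧ ∀ j i, lam j i ≤ C := by
  choose N hN using fun j => (h j).2
  refine ⟨Finset.univ.sup N, Finset.univ.sup (fun j => lam j 0),
    fun j i hi => hN j i (le_trans (Finset.le_sup (Finset.mem_univ j)) hi),
    fun j i => le_trans (partAntitone (h j) (Nat.zero_le i))
      (Finset.le_sup (f := fun j => lam j 0) (Finset.mem_univ j))⟩

lemma natCard_cast_sum {l B : ℕ} (P : Fin l × ℕ → Prop) [DecidablePred P]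
    (hP : ∀ x, P x → x.2 < B) :
    (Nat.card {x : Fin l × ℕ // P x} : ℤ) =
      ∑ x ∈ Finset.univ ×ˢ Finset.range B, if P x then 1 else 0 := by
  have h1 : Nat.card {x : Fin l × ℕ // P x} = ({x | P x} : Set (Fin l × ℕ)).ncard :=
    Nat.card_coe_set_eq {x | P x}
  have h2 : ({x | P x} : Set (Fin l × ℕ)) =
      ↑((Finset.univ ×ˢ Finset.range B).filter P) := by
    ext x
    simp only [Set.mem_setOf_eq, Finset.coe_filter, Finset.mem_product, Finset.mem_univ,
      Finset.mem_range, true_and]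
    exact ⟨fun h => ⟨hP x h, h⟩, fun h => h.2⟩
  rw [h1, h2, Set.ncard_coe_finset, Finset.card_filter]
  push_cast
  rfl

lemma eFun_cast (n : ℕ) {l : ℕ} (v : Fin l → ℕ) (lam : Fin l → ℕ → ℕ) (k : ℕ) (a : ZMod n) :
    (eFun n v lam k a : ℤ) =
      ∑ j : Fin l, if (v j : ZMod n) + (k : ZMod n) - (colHt (lam j) (k + 1) : ZMod n) = a
        then 1 else 0 := by
  rw [eFun, Nat.card_eq_fintype_card, Fintype.card_subtype, Finset.card_filter]
  push_cast
  rfl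

lemma wtOf_cast (n : ℕ) {l : ℕ} (v : Fin l → ℕ) (a : ZMod n) :
    wtOf n v a = ∑ j : Fin l, if (v j : ZMod n) = a then 1 else 0 := by
  rw [wtOf, Finset.card_filter]
  push_cast
  rfl

/-- `R`-count: rows of length `> k` whose right end has colour `a`, as a finite sum. -/
def rcntZ (n : ℕ) {l : ℕ} (v : Fin l → ℕ) (lam : Fin l → ℕ → ℕ) (B k : ℕ) (a : ZMod n) : ℤ :=
  ∑ x ∈ Finset.univ ×ˢ Finset.range B,
    if k < lam x.1 x.2 ∧ colour n v x.1 x.2 (lam x.1 x.2) = a then 1 else 0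

/-- `L`-count: rows of length `> k` whose left end has colour `a`, as a finite sum. -/
def lcntZ (n : ℕ) {l : ℕ} (v : Fin l → ℕ) (lam : Fin l → ℕ → ℕ) (B k : ℕ) (a : ZMod n) : ℤ :=
  ∑ x ∈ Finset.univ ×ˢ Finset.range B,
    if k < lam x.1 x.2 ∧ colour n v x.1 x.2 1 = a then 1 else 0

/-- rows of length exactly `m` with right-end colour `a`. -/
def psiZ (n : ℕ) {l : ℕ} (v : Fin l → ℕ) (lam : Fin l → ℕ → ℕ) (B m : ℕ) (a : ZMod n) : ℤ :=
  ∑ x ∈ Finset.univ ×ˢ Finset.range B,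
    if lam x.1 x.2 = m ∧ colour n v x.1 x.2 m = a then 1 else 0

/-- rows of length exactly `m` with left-end colour `a`. -/
def lZ (n : ℕ) {l : ℕ} (v : Fin l → ℕ) (lam : Fin l → ℕ → ℕ) (B m : ℕ) (a : ZMod n) : ℤ :=
  ∑ x ∈ Finset.univ ×ˢ Finset.range B,
    if lam x.1 x.2 = m ∧ colour n v x.1 x.2 1 = a then 1 else 0

lemma telescope_Ico (g : ℕ → ℤ) : ∀ {a b : ℕ}, a ≤ b →
    ∑ s ∈ Finset.Ico a b, (g s - g (s + 1)) = g a - g b := by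
  intro a b hab
  induction b with
  | zero => interval_cases a; simp
  | succ b ih =>
    rcases Nat.lt_or_ge a (b + 1) with h | h
    · have hab' : a ≤ b := by omega
      rw [Finset.sum_Ico_succ_top hab', ih hab']
      ring
    · have : a = b + 1 := by omega
      subst this
      simp

end Auxiliary
section Core

open Finset

/-- Lemma A: the `e`-function in terms of left-end colours of long rows. -/
lemma eFun_formula (n : ℕ) {l : ℕ} (v : Fin l → ℕ) (lam : Fin l → ℕ → ℕ)
    (hmp : IsMP l lam) (B : ℕ) (hB : ∀ j i, B ≤ i → lam j i = 0) (k : ℕ) (a : ZMod n) :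
    (eFun n v lam k a : ℤ) = wtOf n v (a - (k : ZMod n))
      - lcntZ n v lam B k (a - (k : ZMod n)) + lcntZ n v lam B k (a - (k : ZMod n) + 1) := by
  rw [eFun_cast, wtOf_cast, lcntZ, lcntZ]
  simp only [Finset.sum_product]
  simp only [← Finset.sum_sub_distrib, ← Finset.sum_add_distrib]
  apply Finset.sum_congr rfl
  intro j _
  have hmem : ∀ s, k < lam j s ↔ s < colHt (lam j) (k + 1) := fun s =>
    colHt_iff (hmp j) (by omega) s
  set h := colHt (lam j) (k + 1) with hh
  have hhB : h ≤ B := by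
    by_contra hb
    push_neg at hb
    have h1 : k < lam j B := (hmem B).mpr (by omega)
    have := hB j B le_rfl
    omega
  have S1 : ∑ s ∈ Finset.range B,
      (if k < lam j s ∧ colour n v j s 1 = a - (k : ZMod n) then (1:ℤ) else 0)
      = ∑ s ∈ Finset.range h,
        (if (v j : ZMod n) + (k : ZMod n) - (s : ZMod n) = a then (1:ℤ) else 0) := by
    rw [← Finset.sum_subset (Finset.range_subset_range.mpr hhB)
      (fun s _ hs => by
        rw [if_neg]
        rintro ⟨h1, -⟩
        exact hs (Finset.mem_range.mpr ((hmem s).mp h1)))]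
    apply Finset.sum_congr rfl
    intro s hs
    have hs' : s < h := Finset.mem_range.mp hs
    apply indZ_congr
    have hlt : k < lam j s := (hmem s).mpr hs'
    rw [colour]
    constructor
    · rintro ⟨-, h2⟩
      push_cast at h2 ⊢
      linear_combination h2
    · intro h2
      refine ⟨hlt, ?_⟩
      push_cast at h2 ⊢
      linear_combination h2
  have S2 : ∑ s ∈ Finset.range B,
      (if k < lam j s ∧ colour n v j s 1 = a - (k : ZMod n) + 1 then (1:ℤ) else 0)
      = ∑ s ∈ Finset.range h,
        (if (v j : ZMod n) + (k : ZMod n) - ((s + 1 : ℕ) : ZMod n) = a then (1:ℤ) else 0) := by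
    rw [← Finset.sum_subset (Finset.range_subset_range.mpr hhB)
      (fun s _ hs => by
        rw [if_neg]
        rintro ⟨h1, -⟩
        exact hs (Finset.mem_range.mpr ((hmem s).mp h1)))]
    apply Finset.sum_congr rfl
    intro s hs
    have hs' : s < h := Finset.mem_range.mp hs
    apply indZ_congr
    have hlt : k < lam j s := (hmem s).mpr hs'
    rw [colour]
    constructor
    · rintro ⟨-, h2⟩
      push_cast at h2 ⊢
      linear_combination h2
    · intro h2
      refine ⟨hlt, ?_⟩
      push_cast at h2 ⊢
      linear_combination h2
  rw [S1, S2]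
  have e0 : (if (v j : ZMod n) = a - (k : ZMod n) then (1:ℤ) else 0)
      = (if (v j : ZMod n) + (k : ZMod n) - ((0 : ℕ) : ZMod n) = a then (1:ℤ) else 0) := by
    apply indZ_congr
    push_cast
    constructor <;> intro hx <;> linear_combination hx
  rw [e0]
  have tele := telescope_Ico
    (fun s => if (v j : ZMod n) + (k : ZMod n) - (s : ZMod n) = a then (1:ℤ) else 0)
    (Nat.zero_le h)
  rw [← Finset.range_eq_Ico, Finset.sum_sub_distrib] at tele
  linarith [tele]

end Core
section Step

open Finset

/-- Key step identity relating consecutive `e`-functions and exact-length rows. -/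
lemma eFun_step (n : ℕ) {l : ℕ} (v : Fin l → ℕ) (lam : Fin l → ℕ → ℕ)
    (hmp : IsMP l lam) (B : ℕ) (hB : ∀ j i, B ≤ i → lam j i = 0) (k : ℕ) (i : ZMod n) :
    (eFun n v lam (k + 1) i : ℤ) - (eFun n v lam k (i - 1) : ℤ)
      = (rcntZ n v lam B k (i - 1) - rcntZ n v lam B (k + 1) (i - 1))
        - (rcntZ n v lam B k i - rcntZ n v lam B (k + 1) i) := by
  rw [eFun_cast, eFun_cast, rcntZ, rcntZ, rcntZ, rcntZ]
  simp only [Finset.sum_product]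
  simp only [← Finset.sum_sub_distrib]
  apply Finset.sum_congr rfl
  intro j _
  have hmem1 : ∀ s, k < lam j s ↔ s < colHt (lam j) (k + 1) := fun s =>
    colHt_iff (hmp j) (by omega) s
  have hmem2 : ∀ s, k + 1 < lam j s ↔ s < colHt (lam j) (k + 2) := fun s =>
    colHt_iff (hmp j) (by omega) s
  set h1 := colHt (lam j) (k + 1) with hh1
  set h2 := colHt (lam j) (k + 2) with hh2
  have h21 : h2 ≤ h1 := by
    by_contra hb
    push_neg at hb
    have hx : k + 1 < lam j h1 := (hmem2 h1).mpr hb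
    have hy : h1 < h1 := (hmem1 h1).mp (by omega)
    omega
  have hsub : Finset.Ico h2 h1 ⊆ Finset.range B := by
    intro s hs
    have hs1 : s < h1 := (Finset.mem_Ico.mp hs).2
    have hlt : k < lam j s := (hmem1 s).mpr hs1
    rw [Finset.mem_range]
    by_contra hb
    have := hB j s (by omega)
    omega
  have hsum : ∑ s ∈ Finset.range B,
      (((if k < lam j s ∧ colour n v j s (lam j s) = i - 1 then (1:ℤ) else 0)
        - (if k + 1 < lam j s ∧ colour n v j s (lam j s) = i - 1 then (1:ℤ) else 0))
        - ((if k < lam j s ∧ colour n v j s (lam j s) = i then (1:ℤ) else 0)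
        - (if k + 1 < lam j s ∧ colour n v j s (lam j s) = i then (1:ℤ) else 0)))
      = ∑ s ∈ Finset.Ico h2 h1,
        ((if (v j : ZMod n) + (k : ZMod n) + 1 - (s : ZMod n) = i then (1:ℤ) else 0)
          - (if (v j : ZMod n) + (k : ZMod n) + 1 - ((s + 1 : ℕ) : ZMod n) = i
              then (1:ℤ) else 0)) := by
    rw [← Finset.sum_subset hsub (fun s _ hs => by
      rw [Finset.mem_Ico] at hs
      push_neg at hs
      rcases Nat.lt_or_ge s h2 with hc | hc
      · have hA : k + 1 < lam j s := (hmem2 s).mpr hc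
        have hA' : k < lam j s := by omega
        simp only [hA, hA', true_and]
        ring
      · have hs1 : h1 ≤ s := hs hc
        have hnA : ¬ k < lam j s := fun hcon => by
          have := (hmem1 s).mp hcon; omega
        have hnA2 : ¬ k + 1 < lam j s := by omega
        simp only [hnA, hnA2, false_and, if_false]
        ring)]
    apply Finset.sum_congr rfl
    intro s hs
    rw [Finset.mem_Ico] at hs
    have hA : k < lam j s := (hmem1 s).mpr hs.2
    have hnA : ¬ k + 1 < lam j s := fun hcon => by
      have := (hmem2 s).mp hcon; omega
    have hlam : lam j s = k + 1 := by omega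
    simp only [hA, hnA, true_and, false_and, if_false]
    rw [hlam]
    have hc1 : (if colour n v j s (k + 1) = i - 1 then (1:ℤ) else 0)
        = (if (v j : ZMod n) + (k : ZMod n) + 1 - (s : ZMod n) = i then (1:ℤ) else 0) := by
      apply indZ_congr
      rw [colour]
      push_cast
      constructor <;> intro hx <;> linear_combination hx
    have hc2 : (if colour n v j s (k + 1) = i then (1:ℤ) else 0)
        = (if (v j : ZMod n) + (k : ZMod n) + 1 - ((s + 1 : ℕ) : ZMod n) = i
            then (1:ℤ) else 0) := by
      apply indZ_congr
      rw [colour]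
      push_cast
      constructor <;> intro hx <;> linear_combination hx
    rw [hc1, hc2]
    ring
  have tele : ∑ s ∈ Finset.Ico h2 h1,
      ((if (v j : ZMod n) + (k : ZMod n) + 1 - (s : ZMod n) = i then (1:ℤ) else 0)
        - (if (v j : ZMod n) + (k : ZMod n) + 1 - ((s + 1 : ℕ) : ZMod n) = i
            then (1:ℤ) else 0))
      = (if (v j : ZMod n) + (k : ZMod n) + 1 - (h2 : ZMod n) = i then (1:ℤ) else 0)
        - (if (v j : ZMod n) + (k : ZMod n) + 1 - (h1 : ZMod n) = i then (1:ℤ) else 0) :=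
    telescope_Ico
      (fun t : ℕ => if (v j : ZMod n) + (k : ZMod n) + 1 - (t : ZMod n) = i
        then (1:ℤ) else 0) h21
  rw [hsum, tele]
  have hc3 : (if (v j : ZMod n) + ((k + 1 : ℕ) : ZMod n) - (h2 : ZMod n) = i
      then (1:ℤ) else 0)
      = (if (v j : ZMod n) + (k : ZMod n) + 1 - (h2 : ZMod n) = i then (1:ℤ) else 0) := by
    apply indZ_congr
    push_cast
    constructor <;> intro hx <;> linear_combination hx
  have hc4 : (if (v j : ZMod n) + (k : ZMod n) - (h1 : ZMod n) = i - 1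
      then (1:ℤ) else 0)
      = (if (v j : ZMod n) + (k : ZMod n) + 1 - (h1 : ZMod n) = i then (1:ℤ) else 0) := by
    apply indZ_congr
    constructor <;> intro hx <;> linear_combination hx
  rw [hc3, hc4]

end Step
section PathFormula

open Finset

/-- The fundamental formula: `p_k(i) = e_k(i) + R_k(i-1) - R_k(i)`. -/
lemma pathFormula (n : ℕ) {l : ℕ} (v : Fin l → ℕ) (lam : Fin l → ℕ → ℕ)
    (hmp : IsMP l lam) (B C : ℕ) (hB : ∀ j i, B ≤ i → lam j i = 0)
    (hC : ∀ j i, lam j i ≤ C) (p : ℕ → ZMod n → ℤ) (hp : IsPi n v lam p) :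
    ∀ k i, p k i = (eFun n v lam k i : ℤ)
      + rcntZ n v lam B k (i - 1) - rcntZ n v lam B k i := by
  obtain ⟨Kp, hKp⟩ := hp.2
  have base : ∀ k, Kp ≤ k → C ≤ k → ∀ i, p k i = (eFun n v lam k i : ℤ)
      + rcntZ n v lam B k (i - 1) - rcntZ n v lam B k i := by
    intro k hk1 hk2 i
    have h0 : ∀ j : Fin l, colHt (lam j) (k + 1) = 0 := fun j =>
      colHt_eq_zero (hC j) hk2
    have hrc : ∀ a, rcntZ n v lam B k a = 0 := by
      intro a
      apply Finset.sum_eq_zero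
      intro x _
      rw [if_neg]
      rintro ⟨hlt, -⟩
      have := hC x.1 x.2
      omega
    rw [hrc, hrc, add_zero, sub_zero, hKp k hk1]
    simp only [gsp]
    rw [eFun_cast, wtOf_cast]
    apply Finset.sum_congr rfl
    intro j _
    rw [h0 j]
    apply indZ_congr
    push_cast
    constructor <;> intro hx <;> linear_combination hx
  have step : ∀ k, (∀ i, p (k + 1) i = (eFun n v lam (k + 1) i : ℤ)
        + rcntZ n v lam B (k + 1) (i - 1) - rcntZ n v lam B (k + 1) i) →
      ∀ i, p k i = (eFun n v lam k i : ℤ)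
        + rcntZ n v lam B k (i - 1) - rcntZ n v lam B k i := by
    intro k ih i
    have hstep : p (k + 1) i - p k i = stepWt n (eFun n v lam k) i := congrFun (hp.1 k) i
    simp only [stepWt] at hstep
    have h2 := ih i
    have h3 := eFun_step n v lam hmp B hB k i
    linarith
  have main : ∀ m k, Kp ≤ k + m → C ≤ k + m → ∀ i, p k i = (eFun n v lam k i : ℤ)
      + rcntZ n v lam B k (i - 1) - rcntZ n v lam B k i := by
    intro m
    induction m with
    | zero => intro k hk1 hk2; exact base k (by omega) (by omega)
    | succ m ih => intro k hk1 hk2; exact step k (ih (k + 1) (by omega) (by omega))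
  intro k i
  exact main (Kp + C) k (by omega) (by omega) i

/-- The full path formula in terms of row statistics. -/
lemma pathFormula' (n : ℕ) {l : ℕ} (v : Fin l → ℕ) (lam : Fin l → ℕ → ℕ)
    (hmp : IsMP l lam) (B C : ℕ) (hB : ∀ j i, B ≤ i → lam j i = 0)
    (hC : ∀ j i, lam j i ≤ C) (p : ℕ → ZMod n → ℤ) (hp : IsPi n v lam p) :
    ∀ k i, p k i = wtOf n v (i - (k : ZMod n))
      - lcntZ n v lam B k (i - (k : ZMod n)) + lcntZ n v lam B k (i - (k : ZMod n) + 1)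
      + rcntZ n v lam B k (i - 1) - rcntZ n v lam B k i := by
  intro k i
  have h1 := pathFormula n v lam hmp B C hB hC p hp k i
  have h2 := eFun_formula n v lam hmp B hB k i
  linarith

end PathFormula
section Translate

open Finset

lemma rcnt_decomp (n : ℕ) {l : ℕ} (v : Fin l → ℕ) (lam : Fin l → ℕ → ℕ)
    (B k C : ℕ) (hC : ∀ j i, lam j i ≤ C) (a : ZMod n) :
    rcntZ n v lam B k a = ∑ m ∈ Finset.Icc (k + 1) C, psiZ n v lam B m a := by
  rw [rcntZ]
  simp only [psiZ]
  rw [Finset.sum_comm]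
  apply Finset.sum_congr rfl
  intro x _
  simp only [ite_and]
  rw [Finset.sum_ite_eq]
  have htC : lam x.1 x.2 ≤ C := hC x.1 x.2
  by_cases hk : k < lam x.1 x.2
  · rw [if_pos hk, if_pos (Finset.mem_Icc.mpr ⟨hk, htC⟩)]
  · rw [if_neg hk, if_neg (fun hmem => hk (by have := (Finset.mem_Icc.mp hmem).1; omega))]

lemma lcnt_decomp (n : ℕ) {l : ℕ} (v : Fin l → ℕ) (lam : Fin l → ℕ → ℕ)
    (B k C : ℕ) (hC : ∀ j i, lam j i ≤ C) (a : ZMod n) :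
    lcntZ n v lam B k a = ∑ m ∈ Finset.Icc (k + 1) C, lZ n v lam B m a := by
  rw [lcntZ]
  simp only [lZ]
  rw [Finset.sum_comm]
  apply Finset.sum_congr rfl
  intro x _
  simp only [ite_and]
  rw [Finset.sum_ite_eq]
  have htC : lam x.1 x.2 ≤ C := hC x.1 x.2
  by_cases hk : k < lam x.1 x.2
  · rw [if_pos hk, if_pos (Finset.mem_Icc.mpr ⟨hk, htC⟩)]
  · rw [if_neg hk, if_neg (fun hmem => hk (by have := (Finset.mem_Icc.mp hmem).1; omega))]

lemma lZ_eq_psiZ (n : ℕ) {l : ℕ} (v : Fin l → ℕ) (lam : Fin l → ℕ → ℕ)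
    (B m : ℕ) (a : ZMod n) :
    lZ n v lam B m a = psiZ n v lam B m (a + (m : ZMod n) - 1) := by
  rw [lZ, psiZ]
  apply Finset.sum_congr rfl
  intro x _
  apply indZ_congr
  constructor
  · rintro ⟨h1, h2⟩
    refine ⟨h1, ?_⟩
    rw [colour] at h2 ⊢
    push_cast at h2 ⊢
    linear_combination h2
  · rintro ⟨h1, h2⟩
    refine ⟨h1, ?_⟩
    rw [colour] at h2 ⊢
    push_cast at h2 ⊢
    linear_combination h2

lemma psiZ_cast (n : ℕ) {l : ℕ} (v : Fin l → ℕ) (lam : Fin l → ℕ → ℕ)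
    (B : ℕ) (hB : ∀ j i, B ≤ i → lam j i = 0) (m : ℕ) (hm : 1 ≤ m) (a : ZMod n) :
    (psiCount n v lam m a : ℤ) = psiZ n v lam B m a := by
  rw [psiCount, psiZ]
  exact natCard_cast_sum _ (fun x hx => by
    have h0 : lam x.1 x.2 = m := hx.1
    by_contra hb
    push_neg at hb
    have := hB x.1 x.2 hb
    omega)

lemma leftCount_cast (n : ℕ) {l : ℕ} (v : Fin l → ℕ) (lam : Fin l → ℕ → ℕ)
    (B : ℕ) (hB : ∀ j i, B ≤ i → lam j i = 0) (m : ℕ) (hm : 1 ≤ m) (a : ZMod n) :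
    (leftCount n v lam m a : ℤ) = lZ n v lam B m a := by
  rw [leftCount, lZ]
  exact natCard_cast_sum _ (fun x hx => by
    have h0 : lam x.1 x.2 = m := hx.1
    by_contra hb
    push_neg at hb
    have := hB x.1 x.2 hb
    omega)

end Translate

/-- if `λ̲ ∈ 𝒴(Λ_{-u})` and its left-end colours match the right-end
colours of `λ` (complemented), then `π(λ̲)_k = Λ_{k-u} - ♯Λ + (♯p)_k` for all `k`.
Here `λ̲` is realised as the 1-multipartition `mu` of highest weight `Λ_{-u}` whose
part multiplicities agree with the row multiplicities of `λ`, and `q = π(λ̲)`. -/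
theorem underline_path_formula (n : ℕ) [NeZero n] (hn : 2 ≤ n) (l : ℕ)
    (v : Fin l → ℕ) (hv : SortedV n l v) (u : ℕ) (hu : u < n)
    (lam : Fin l → ℕ → ℕ) (p : ℕ → ZMod n → ℤ) (hHL : IsHL n v lam p)
    (mu : Fin 1 → ℕ → ℕ)
    (hmud : ∀ k : ℕ, 0 < k →
      Nat.card {i : ℕ // mu 0 i = k} = Nat.card {x : Fin l × ℕ // lam x.1 x.2 = k})
    (q : ℕ → ZMod n → ℤ)
    (hq : IsHL n (fun _ : Fin 1 => (n - u) % n) mu q)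
    (hmatch : ∀ k : ℕ, 0 < k → ∀ r : ZMod n,
      leftCount n (fun _ : Fin 1 => (n - u) % n) mu k r = psiCount n v lam k (-r)) :
    ∀ (k : ℕ) (i : ZMod n),
      q k i = Lam n ((k : ZMod n) - (u : ZMod n)) i - wtOf n v (-i)
        + p k ((k : ZMod n) - i) := by
  intro k i
  have hmpl : IsMP l lam := hHL.1
  have hmpm : IsMP 1 mu := hq.1
  obtain ⟨Bl, Cl, hBl, hCl⟩ := exists_bounds hmpl
  obtain ⟨Bm, Cm, hBm, hCm⟩ := exists_bounds hmpm
  set w : Fin 1 → ℕ := fun _ : Fin 1 => (n - u) % n with hw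
  set C := max Cl Cm with hCdef
  have hCl' : ∀ j i, lam j i ≤ C := fun j i => le_trans (hCl j i) (le_max_left _ _)
  have hCm' : ∀ j i, mu j i ≤ C := fun j i => le_trans (hCm j i) (le_max_right _ _)
  have Hlam := pathFormula' n v lam hmpl Bl C hBl hCl' p hHL.2.2.1
  have Hmu := pathFormula' n w mu hmpm Bm C hBm hCm' q hq.2.2.1
  have T1 : ∀ a : ZMod n, rcntZ n v lam Bl k a = lcntZ n w mu Bm k (-a) := by
    intro a
    rw [rcnt_decomp n v lam Bl k C hCl' a, lcnt_decomp n w mu Bm k C hCm' (-a)]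
    apply Finset.sum_congr rfl
    intro m hm
    have hm1 : 1 ≤ m := by have := (Finset.mem_Icc.mp hm).1; omega
    rw [← psiZ_cast n v lam Bl hBl m hm1 a, ← leftCount_cast n w mu Bm hBm m hm1 (-a)]
    have hh := hmatch m (by omega) (-a)
    rw [neg_neg] at hh
    exact_mod_cast hh.symm
  have T2 : ∀ a : ZMod n, lcntZ n v lam Bl k a = rcntZ n w mu Bm k (-a) := by
    intro a
    rw [lcnt_decomp n v lam Bl k C hCl' a, rcnt_decomp n w mu Bm k C hCm' (-a)]
    apply Finset.sum_congr rfl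
    intro m hm
    have hm1 : 1 ≤ m := by have := (Finset.mem_Icc.mp hm).1; omega
    calc lZ n v lam Bl m a = psiZ n v lam Bl m (a + (m : ZMod n) - 1) :=
        lZ_eq_psiZ n v lam Bl m a
    _ = (psiCount n v lam m (a + (m : ZMod n) - 1) : ℤ) :=
        (psiZ_cast n v lam Bl hBl m hm1 _).symm
    _ = (leftCount n w mu m (-(a + (m : ZMod n) - 1)) : ℤ) := by
        have hh := hmatch m (by omega) (-(a + (m : ZMod n) - 1))
        rw [neg_neg] at hh
        exact_mod_cast hh.symm
    _ = lZ n w mu Bm m (-(a + (m : ZMod n) - 1)) :=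
        leftCount_cast n w mu Bm hBm m hm1 _
    _ = psiZ n w mu Bm m (-(a + (m : ZMod n) - 1) + (m : ZMod n) - 1) :=
        lZ_eq_psiZ n w mu Bm m _
    _ = psiZ n w mu Bm m (-a) := by congr 1; ring
  rw [Hmu k i, Hlam k ((k : ZMod n) - i)]
  have e1 : (k : ZMod n) - i - (k : ZMod n) = -i := by ring
  rw [e1]
  have t1 : lcntZ n v lam Bl k (-i) = rcntZ n w mu Bm k i := by
    rw [T2]; congr 1; ring
  have t2 : lcntZ n v lam Bl k (-i + 1) = rcntZ n w mu Bm k (i - 1) := by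
    rw [T2]; congr 1; ring
  have t3 : rcntZ n v lam Bl k ((k : ZMod n) - i - 1)
      = lcntZ n w mu Bm k (i - (k : ZMod n) + 1) := by
    rw [T1]; congr 1; ring
  have t4 : rcntZ n v lam Bl k ((k : ZMod n) - i)
      = lcntZ n w mu Bm k (i - (k : ZMod n)) := by
    rw [T1]; congr 1; ring
  rw [t1, t2, t3, t4]
  have hwt : wtOf n w (i - (k : ZMod n)) = Lam n ((k : ZMod n) - (u : ZMod n)) i := by
    rw [wtOf_cast, Lam]
    rw [Fin.sum_univ_one]
    have hcast : ((w 0 : ℕ) : ZMod n) = -(u : ZMod n) := by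
      rw [hw]
      simp only
      rw [ZMod.natCast_mod, Nat.cast_sub hu.le, ZMod.natCast_self, zero_sub]
    rw [hcast]
    apply indZ_congr
    constructor <;> intro hx <;> linear_combination -hx
  rw [hwt]
  ring

end BF
end
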